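/- arXiv:2206.00032 — 5 statements merged into one kernel-verified Lean document; each statement's English description precedes it below -/
import Mathlib

section
/- Let A, B ⊆ ℝ² be compact convex sets, each with nonempty interior, and let t ∈ ℝ². Then the interiors of A and of the translate t + B intersect (i.e., interior(A) ∩ interior(t + B) ≠ ∅) if and only if t lies in the interior of the no-fit polygon NFP_{AB} = A + (−B). Consequently, the translate t + B can be placed without overlapping A exactly when t lies on the boundary or in the exterior of NFP_{AB}. -/
/-!
For convex `s`, `t` with nonempty interiors, `interior (s + t) = interior s + interior t`:
the right-hand side is open and convex, and `s + t` lies in its closure because a convex body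
is the closure of its interior, while an open convex set is the interior of its closure.
Applied to `A + -B`, the point `t` is interior exactly when `t = a - b` with `a ∈ interior A`,
`b ∈ interior B`, i.e. when `a = t + b` is a common interior point of `A` and `t +ᵥ B`.
-/

open Set
open scoped Pointwise

theorem interior_neg {G : Type*} [TopologicalSpace G] [AddGroup G] [IsTopologicalAddGroup G]
    (s : Set G) : interior (-s) = -interior s := by
  simp only [← neg_preimage]
  exact ((Homeomorph.neg G).preimage_interior s).symm

theorem inter_vadd_nonempty_iff_mem_add_neg {G : Type*} [AddGroup G] {s u : Set G} {t : G} :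
    (s ∩ (t +ᵥ u)).Nonempty ↔ t ∈ s + -u := by
  rw [inter_comm, vadd_inter_nonempty_iff]
  constructor
  · rintro ⟨a, b, ⟨ha, hb⟩, rfl⟩
    exact add_mem_add ha (neg_mem_neg.2 hb)
  · rintro ⟨a, ha, b, hb, rfl⟩
    exact ⟨a, -b, ⟨ha, hb⟩, by rw [neg_neg]⟩

theorem frontier_union_compl_closure {X : Type*} [TopologicalSpace X] (s : Set X) :
    frontier s ∪ (closure s)ᶜ = (interior s)ᶜ := by
  ext x
  have hint_closure := @interior_subset_closure _ _ s x
  simp only [frontier, mem_union, mem_sdiff, mem_compl_iff]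
  tauto

section Convex

variable {𝕜 E : Type*} [Field 𝕜] [LinearOrder 𝕜] [IsStrictOrderedRing 𝕜] [TopologicalSpace 𝕜]
  [OrderTopology 𝕜] [AddCommGroup E] [Module 𝕜 E] [TopologicalSpace E] [IsTopologicalAddGroup E]
  [ContinuousSMul 𝕜 E] {s t : Set E}

theorem Convex.subset_closure_interior (hs : Convex 𝕜 s) (hs' : (interior s).Nonempty) :
    s ⊆ closure (interior s) :=
  hs.closure_interior_eq_closure_of_nonempty_interior hs' ▸ subset_closure

theorem Convex.interior_add (hs : Convex 𝕜 s) (ht : Convex 𝕜 t) (hs' : (interior s).Nonempty)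
    (ht' : (interior t).Nonempty) : interior (s + t) = interior s + interior t := by
  set U := interior s + interior t
  have hU : IsOpen U := isOpen_interior.add_right
  have hst : s + t ⊆ closure U :=
    (add_subset_add (hs.subset_closure_interior hs') (ht.subset_closure_interior ht')).trans
      (vadd_set_closure_subset _ _)
  refine subset_antisymm ?_ (interior_maximal (add_subset_add interior_subset interior_subset) hU)
  calc interior (s + t) ⊆ interior (closure U) := interior_mono hst
    _ = interior U := (hs.interior.add ht.interior).interior_closure_eq_interior_of_nonempty_interior
          (hU.interior_eq ▸ hs'.add ht')
    _ = U := hU.interior_eq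

end Convex

theorem nfp_interior_overlap_iff_general (A B : Set (ℝ × ℝ)) (t : ℝ × ℝ)
    (hAconv : Convex ℝ A) (hAint : (interior A).Nonempty)
    (hBconv : Convex ℝ B) (hBint : (interior B).Nonempty) :
    ((interior A ∩ interior (t +ᵥ B)).Nonempty ↔ t ∈ interior (A + -B)) ∧
    (interior A ∩ interior (t +ᵥ B) = ∅ ↔
      t ∈ frontier (A + -B) ∪ (closure (A + -B))ᶜ) := by
  have hoverlap : (interior A ∩ interior (t +ᵥ B)).Nonempty ↔ t ∈ interior (A + -B) := by
    rw [hAconv.interior_add hBconv.neg hAint (interior_neg B ▸ hBint.neg), interior_vadd,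
      interior_neg]
    exact inter_vadd_nonempty_iff_mem_add_neg
  refine ⟨hoverlap, ?_⟩
  rw [frontier_union_compl_closure, mem_compl_iff, ← hoverlap, not_nonempty_iff_eq_empty]

/-- The no-fit polygon characterization of overlap: for compact convex sets `A`, `B` in the
plane with nonempty interior, the interiors of `A` and the translate `t +ᵥ B` intersect
iff `t` lies in the interior of the no-fit polygon `A + (-B)`; consequently `t +ᵥ B` can
be placed without overlapping `A` exactly when `t` lies on the frontier or in the exterior
of `A + (-B)`. -/
theorem nfp_interior_overlap_iff (A B : Set (ℝ × ℝ)) (t : ℝ × ℝ)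
    (hAc : IsCompact A) (hAconv : Convex ℝ A) (hAint : (interior A).Nonempty)
    (hBc : IsCompact B) (hBconv : Convex ℝ B) (hBint : (interior B).Nonempty) :
    ((interior A ∩ interior (t +ᵥ B)).Nonempty ↔ t ∈ interior (A + -B)) ∧
    (interior A ∩ interior (t +ᵥ B) = ∅ ↔
      t ∈ frontier (A + -B) ∪ (closure (A + -B))ᶜ) :=
  nfp_interior_overlap_iff_general A B t hAconv hAint hBconv hBint
end

section
/- Let P = A₁ ∪ … ∪ A_p and Q = B₁ ∪ … ∪ B_q be finite unions of compact convex subsets of ℝ². Then interior(P) ∩ interior(Q) ≠ ∅ if and only if there exist indices f, g with interior(A_f) ∩ interior(B_g) ≠ ∅. In particular, two polygonal pieces decomposed into compact convex parts overlap exactly when some pair of their convex parts overlaps. -/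
open Set

/-- Two pieces given as finite unions of compact convex parts overlap iff some pair of
their convex parts overlaps. -/
theorem overlap_union_iff_exists_parts (p q : ℕ)
    (A : Fin p → Set (ℝ × ℝ)) (B : Fin q → Set (ℝ × ℝ))
    (hAc : ∀ f, IsCompact (A f)) (hAconv : ∀ f, Convex ℝ (A f))
    (hBc : ∀ g, IsCompact (B g)) (hBconv : ∀ g, Convex ℝ (B g)) :
    (interior (⋃ f, A f) ∩ interior (⋃ g, B g)).Nonempty ↔
      ∃ f g, (interior (A f) ∩ interior (B g)).Nonempty := by
  constructor
  · rintro ⟨x, hxA, hxB⟩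
    set W : Set (ℝ × ℝ) := interior (⋃ f, A f) ∩ interior (⋃ g, B g) with hW
    have hWopen : IsOpen W := isOpen_interior.inter isOpen_interior
    -- cover ℝ² by the closed sets A f ∩ B g and Wᶜ
    set C : Option (Fin p × Fin q) → Set (ℝ × ℝ) := fun i =>
      match i with
      | none => Wᶜ
      | some (f, g) => A f ∩ B g with hC
    have hclosed : ∀ i, IsClosed (C i) := by
      rintro (_ | ⟨f, g⟩)
      · exact hWopen.isClosed_compl
      · exact ((hAc f).isClosed).inter ((hBc g).isClosed)
    have hcover : ⋃ i, C i = univ := by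
      ext z
      simp only [mem_iUnion, mem_univ, iff_true]
      by_cases hz : z ∈ W
      · obtain ⟨hz1, hz2⟩ := hz
        obtain ⟨f, hf⟩ := mem_iUnion.1 (interior_subset hz1)
        obtain ⟨g, hg⟩ := mem_iUnion.1 (interior_subset hz2)
        exact ⟨some (f, g), hf, hg⟩
      · exact ⟨none, hz⟩
    have hdense := dense_iUnion_interior_of_closed hclosed hcover
    obtain ⟨z, hzW, hzD⟩ := hdense.inter_open_nonempty W hWopen ⟨x, hxA, hxB⟩
    obtain ⟨i, hi⟩ := mem_iUnion.1 hzD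
    match i with
    | none => exact absurd hzW (interior_subset hi)
    | some (f, g) =>
        exact ⟨f, g, z, interior_mono inter_subset_left hi,
          interior_mono inter_subset_right hi⟩
  · rintro ⟨f, g, z, hz1, hz2⟩
    exact ⟨z, interior_mono (subset_iUnion A f) hz1, interior_mono (subset_iUnion B g) hz2⟩
end

section
/- Let P = A₁ ∪ … ∪ A_p and Q = B₁ ∪ … ∪ B_q be finite unions of compact convex subsets of ℝ², where every convex part A_f and B_g has nonempty interior, and let s, t ∈ ℝ² be translation vectors. Then the translated pieces s + P and t + Q do not overlap (interior(s + P) ∩ interior(t + Q) = ∅) if and only if for every pair of indices f, g the relative position vector t − s does not lie in the interior of the convex no-fit polygon part NFP^{fg} = A_f + (−B_g). -/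
open Set
open scoped Pointwise

/-- A nonempty open set contained in a finite union of closed sets meets the interior of
one of them. -/
lemma open_subset_finite_union_closed {X : Type*} [TopologicalSpace X] {ι : Type*}
    [DecidableEq ι] (C : ι → Set X) (hC : ∀ i, IsClosed (C i)) :
    ∀ (F : Finset ι) (U : Set X), IsOpen U → U.Nonempty → (U ⊆ ⋃ i ∈ F, C i) →
      ∃ i ∈ F, (U ∩ interior (C i)).Nonempty := by
  intro F
  induction F using Finset.induction with
  | empty =>
    intro U _ hne hsub
    obtain ⟨x, hx⟩ := hne
    simpa using hsub hx
  | @insert i F hi ih =>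
    intro U hU hne hsub
    by_cases h' : (U \ C i).Nonempty
    · have hU' : IsOpen (U \ C i) := hU.sdiff (hC i)
      have hsub' : U \ C i ⊆ ⋃ j ∈ F, C j := by
        rintro x ⟨hxU, hxC⟩
        have := hsub hxU
        simp only [Finset.mem_insert, mem_iUnion, exists_prop] at this ⊢
        rcases this with ⟨j, hj | hj, hxj⟩
        · exact absurd (hj ▸ hxj) hxC
        · exact ⟨j, hj, hxj⟩
      obtain ⟨j, hjF, x, hx1, hx2⟩ := ih (U \ C i) hU' h' hsub'
      exact ⟨j, Finset.mem_insert_of_mem hjF, x, hx1.1, hx2⟩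
    · have hUC : U ⊆ C i := fun x hx => by
        by_contra hxc
        exact h' ⟨x, hx, hxc⟩
      obtain ⟨x, hx⟩ := hne
      exact ⟨i, Finset.mem_insert_self _ _, x, hx,
        (hU.subset_interior_iff.mpr hUC) hx⟩

/-- For convex sets with nonempty interior, any point of `interior (A + -B)` can be written
as a difference of interior points. -/
lemma mem_interior_add_neg {A B : Set (ℝ × ℝ)} (hA : Convex ℝ A) (hB : Convex ℝ B)
    (hAi : (interior A).Nonempty) (hBi : (interior B).Nonempty) {c : ℝ × ℝ}
    (hc : c ∈ interior (A + -B)) : ∃ a ∈ interior A, ∃ b ∈ interior B, c = a - b := by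
  obtain ⟨a₀, ha₀⟩ := hAi
  obtain ⟨b₀, hb₀⟩ := hBi
  set d : ℝ × ℝ := a₀ - b₀ with hd
  -- find ε > 0 with c + ε • (c - d) still in A + -B
  have hcont : Continuous (fun ε : ℝ => c + ε • (c - d)) := by continuity
  have h0 : (fun ε : ℝ => c + ε • (c - d)) 0 ∈ interior (A + -B) := by simpa using hc
  have hev : ∀ᶠ ε in nhds (0 : ℝ), c + ε • (c - d) ∈ interior (A + -B) :=
    hcont.continuousAt.eventually_mem (isOpen_interior.mem_nhds h0)
  have hev' : ∀ᶠ ε in nhdsWithin (0 : ℝ) (Set.Ioi 0),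
      (c + ε • (c - d) ∈ interior (A + -B)) ∧ ε ∈ Set.Ioi 0 :=
    (hev.filter_mono nhdsWithin_le_nhds).and self_mem_nhdsWithin
  obtain ⟨ε, hεmem, hεpos⟩ := hev'.exists
  have hεpos : (0 : ℝ) < ε := hεpos
  have hεmem' : c + ε • (c - d) ∈ A + -B := interior_subset hεmem
  rw [Set.mem_add] at hεmem'
  obtain ⟨a, ha, nb, hnb, hab⟩ := hεmem'
  rw [Set.mem_neg] at hnb
  set b : ℝ × ℝ := -nb with hb
  have hbB : b ∈ B := hnb
  have hab' : a - b = c + ε • (c - d) := by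
    rw [hb]; simpa [sub_eq_add_neg] using hab
  set lam : ℝ := (1 + ε)⁻¹ with hlam
  set mu : ℝ := ε * (1 + ε)⁻¹ with hmu
  have h1ε : (0 : ℝ) < 1 + ε := by linarith
  have hlampos : 0 < lam := by positivity
  have hmupos : 0 < mu := by positivity
  have hlm : lam + mu = 1 := by
    rw [hlam, hmu]; field_simp
  refine ⟨lam • a + mu • a₀, ?_, lam • b + mu • b₀, ?_, ?_⟩
  · exact hA.combo_closure_interior_mem_interior (subset_closure ha) ha₀
      hlampos.le hmupos hlm
  · exact hB.combo_closure_interior_mem_interior (subset_closure hbB) hb₀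
      hlampos.le hmupos hlm
  · have : lam • a + mu • a₀ - (lam • b + mu • b₀) = lam • (a - b) + mu • d := by
      rw [hd]; module
    rw [this, hab']
    symm
    have hlε : lam * ε = mu := by rw [hlam, hmu]; ring
    calc lam • (c + ε • (c - d)) + mu • d
        = (lam + lam * ε) • c + (mu - lam * ε) • d := by module
      _ = c := by rw [hlε, hlm]; simp

/-- Correctness of the pairwise non-overlapping constraints of the NFP-CM models:
translated pieces `s +ᵥ P` and `t +ᵥ Q`, where `P`, `Q` are finite unions of compact convex
parts with nonempty interiors, do not overlap iff for every pair of convex parts the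
relative position vector `t - s` avoids the interior of the convex no-fit polygon part
`A f + -(B g)`. -/
theorem nfp_parts_nonoverlap_iff (p q : ℕ)
    (A : Fin p → Set (ℝ × ℝ)) (B : Fin q → Set (ℝ × ℝ))
    (hAc : ∀ f, IsCompact (A f)) (hAconv : ∀ f, Convex ℝ (A f))
    (hAint : ∀ f, (interior (A f)).Nonempty)
    (hBc : ∀ g, IsCompact (B g)) (hBconv : ∀ g, Convex ℝ (B g))
    (hBint : ∀ g, (interior (B g)).Nonempty)
    (s t : ℝ × ℝ) :
    interior (s +ᵥ ⋃ f, A f) ∩ interior (t +ᵥ ⋃ g, B g) = ∅ ↔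
      ∀ f g, t - s ∉ interior (A f + -(B g)) := by
  constructor
  · intro hempty f g hc
    obtain ⟨a, ha, b, hb, hab⟩ :=
      mem_interior_add_neg (hAconv f) (hBconv g) (hAint f) (hBint g) hc
    have hst : s + a = t + b := by
      have h' := sub_eq_sub_iff_add_eq_add.mp hab
      rw [add_comm]
      exact h'.symm
    have hx1 : s + a ∈ interior (s +ᵥ ⋃ f, A f) := by
      rw [interior_vadd]
      exact ⟨a, interior_mono (subset_iUnion A f) ha, rfl⟩
    have hx2 : s + a ∈ interior (t +ᵥ ⋃ g, B g) := by
      rw [hst, interior_vadd]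
      exact ⟨b, interior_mono (subset_iUnion B g) hb, rfl⟩
    have : s + a ∈ (∅ : Set (ℝ × ℝ)) := hempty ▸ ⟨hx1, hx2⟩
    exact this
  · intro h
    by_contra hne
    obtain ⟨x, hx⟩ := nonempty_iff_ne_empty.mpr hne
    set U := interior (s +ᵥ ⋃ f, A f) ∩ interior (t +ᵥ ⋃ g, B g) with hU
    have hUopen : IsOpen U := isOpen_interior.inter isOpen_interior
    have hUne : U.Nonempty := ⟨x, hx⟩
    have hsub : U ⊆ ⋃ fg ∈ (Finset.univ : Finset (Fin p × Fin q)),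
        ((s +ᵥ A fg.1) ∩ (t +ᵥ B fg.2)) := by
      rintro y ⟨hy1, hy2⟩
      have hy1' : y ∈ s +ᵥ ⋃ f, A f := interior_subset hy1
      have hy2' : y ∈ t +ᵥ ⋃ g, B g := interior_subset hy2
      rw [Set.vadd_set_iUnion, mem_iUnion] at hy1' hy2'
      obtain ⟨f, hf⟩ := hy1'
      obtain ⟨g, hg⟩ := hy2'
      simp only [mem_iUnion, exists_prop]
      exact ⟨(f, g), Finset.mem_univ _, hf, hg⟩
    have hclosed : ∀ fg : Fin p × Fin q, IsClosed ((s +ᵥ A fg.1) ∩ (t +ᵥ B fg.2)) :=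
      fun fg => ((hAc fg.1).isClosed.vadd s).inter ((hBc fg.2).isClosed.vadd t)
    obtain ⟨⟨f, g⟩, -, z, hzU, hzint⟩ :=
      open_subset_finite_union_closed _ hclosed Finset.univ U hUopen hUne hsub
    rw [interior_inter] at hzint
    obtain ⟨hz1, hz2⟩ := hzint
    rw [interior_vadd] at hz1 hz2
    obtain ⟨a, ha, rfl⟩ := hz1
    obtain ⟨b, hb, hba⟩ := hz2
    refine h f g ?_
    have hts : t - s = a - b := by
      have h' : t + b = s + a := hba
      rw [sub_eq_sub_iff_add_eq_add, h', add_comm]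
    rw [hts]
    have hnegsub : -(interior (B g)) ⊆ interior (-(B g)) :=
      interior_maximal (Set.neg_subset_neg.mpr interior_subset) isOpen_interior.neg
    exact subset_interior_add' ⟨a, ha, -b, hnegsub (Set.neg_mem_neg.mpr hb), by ring⟩
end

section
/- Let C ⊆ ℝ² be a nonempty compact convex set, let x̲ = inf{q₁ : (q₁,q₂) ∈ C} and x̄ = sup{q₁ : (q₁,q₂) ∈ C}, and let p = (p₁,p₂) ∈ ℝ² satisfy x̲ < p₁ < x̄. Then p lies in the interior of C if and only if there exist points q, q′ ∈ C with q₁ = q′₁ = p₁, q₂ < p₂, and q′₂ > p₂. Equivalently, a point whose first coordinate lies strictly between the horizontal extremes of C is outside the interior of C exactly when it lies weakly above every point of the vertical fiber of C at p₁ or weakly below every such point. -/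
/-!
If a convex set `C` has points strictly to the left and to the right of `p`, then `C` is a
neighbourhood of `p` as soon as its vertical fiber through `p` is a neighbourhood of `p.2`: every
point near `p` is a convex combination of a point of `C` on its side and a point of that fiber
near `p`. In the plane the fiber is an interval, which is a neighbourhood of `p.2` exactly when it
has points on both sides of it.
-/

open Set Filter Topology

section

variable {F : Type*} [AddCommGroup F] [Module ℝ F]

theorem Convex.preimage_prodMk {C : Set (ℝ × F)} (hconv : Convex ℝ C) (x : ℝ) :
    Convex ℝ (Prod.mk x ⁻¹' C) := by
  intro a ha b hb s t hs ht hst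
  have h := hconv ha hb hs ht hst
  rwa [Prod.smul_mk, Prod.smul_mk, Prod.mk_add_mk, ← add_smul, hst, one_smul] at h

variable [TopologicalSpace F] [IsTopologicalAddGroup F] [ContinuousSMul ℝ F]

-- A point `u` near `p` on the side of `r` is the convex combination `(1 - c) • (p.1, w) + c • r`
-- with `c → 0` and `w → p.2` as `u → p`.
theorem Convex.eventually_mem_of_fiber_mem_nhds {C : Set (ℝ × F)} (hconv : Convex ℝ C)
    {p r : ℝ × F} (hfib : Prod.mk p.1 ⁻¹' C ∈ 𝓝 p.2) (hr : r ∈ C) (hrp : r.1 ≠ p.1) :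
    ∀ᶠ u in 𝓝 p, 0 ≤ (u.1 - p.1) / (r.1 - p.1) → u ∈ C := by
  set c : ℝ × F → ℝ := fun u ↦ (u.1 - p.1) / (r.1 - p.1)
  set w : ℝ × F → F := fun u ↦ (1 - c u)⁻¹ • (u.2 - c u • r.2)
  have hc : Tendsto c (𝓝 p) (𝓝 0) :=
    ((continuous_fst.sub continuous_const).div_const _).tendsto' p 0 (by simp)
  have hw : Tendsto w (𝓝 p) (𝓝 p.2) := by
    simpa using (((tendsto_const_nhds (x := (1 : ℝ))).sub hc).inv₀ (by norm_num)).smul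
      ((continuous_snd.tendsto p).sub (hc.smul_const r.2))
  filter_upwards [hc.eventually (gt_mem_nhds one_pos), hw.eventually hfib] with u hc1 hwC hc0
  have hdecomp : (1 - c u) • ((p.1, w u) : ℝ × F) + c u • r = u := by
    have hc1' : 1 - c u ≠ 0 := by linarith
    ext
    · simp only [Prod.fst_add, Prod.smul_fst, smul_eq_mul, c]
      field_simp
      ring
    · simp [w, smul_smul, hc1']
  rw [← hdecomp]
  exact hconv hwC hr (by linarith) hc0 (by ring)

theorem Convex.mem_interior_iff_fiber_mem_nhds {C : Set (ℝ × F)} (hconv : Convex ℝ C)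
    {p l r : ℝ × F} (hl : l ∈ C) (hr : r ∈ C) (hlp : l.1 < p.1) (hpr : p.1 < r.1) :
    p ∈ interior C ↔ Prod.mk p.1 ⁻¹' C ∈ 𝓝 p.2 := by
  refine ⟨fun hp ↦ (Continuous.prodMk_right p.1).continuousAt.preimage_mem_nhds
    (mem_interior_iff_mem_nhds.mp hp), fun hfib ↦ mem_interior_iff_mem_nhds.mpr ?_⟩
  filter_upwards [hconv.eventually_mem_of_fiber_mem_nhds hfib hl hlp.ne,
    hconv.eventually_mem_of_fiber_mem_nhds hfib hr hpr.ne'] with u hul hur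
  rcases le_total u.1 p.1 with hup | hpu
  · exact hul (div_nonneg_of_nonpos (by linarith) (by linarith))
  · exact hur (div_nonneg (by linarith) (by linarith))

end

theorem Set.OrdConnected.mem_nhds_iff_exists_lt_and_exists_gt {α : Type*} [LinearOrder α]
    [TopologicalSpace α] [OrderTopology α] [DenselyOrdered α] [NoMinOrder α] [NoMaxOrder α]
    {s : Set α} (hs : s.OrdConnected) {a : α} :
    s ∈ 𝓝 a ↔ (∃ b ∈ s, b < a) ∧ ∃ b ∈ s, a < b := by
  refine ⟨fun h ↦ ⟨?_, ?_⟩, fun ⟨⟨b, hb, hba⟩, ⟨b', hb', hab'⟩⟩ ↦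
    mem_of_superset (Icc_mem_nhds hba hab') (hs.out hb hb')⟩
  · exact (Eventually.and (nhdsWithin_le_nhds h) (self_mem_nhdsWithin (s := Iio a))).exists
  · exact (Eventually.and (nhdsWithin_le_nhds h) (self_mem_nhdsWithin (s := Ioi a))).exists

theorem interior_iff_fiber_above_below_general (C : Set (ℝ × ℝ))
    (hne : C.Nonempty) (hconv : Convex ℝ C)
    (p : ℝ × ℝ)
    (hlo : sInf (Prod.fst '' C) < p.1) (hhi : p.1 < sSup (Prod.fst '' C)) :
    (p ∈ interior C ↔
      ∃ q ∈ C, ∃ q' ∈ C, q.1 = p.1 ∧ q'.1 = p.1 ∧ q.2 < p.2 ∧ p.2 < q'.2) ∧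
    (p ∉ interior C ↔
      (∀ y : ℝ, (p.1, y) ∈ C → y ≤ p.2) ∨ (∀ y : ℝ, (p.1, y) ∈ C → p.2 ≤ y)) := by
  obtain ⟨_, ⟨l, hl, rfl⟩, hlp⟩ := exists_lt_of_csInf_lt (hne.image Prod.fst) hlo
  obtain ⟨_, ⟨r, hr, rfl⟩, hpr⟩ := exists_lt_of_lt_csSup (hne.image Prod.fst) hhi
  rw [hconv.mem_interior_iff_fiber_mem_nhds hl hr hlp hpr,
    (hconv.preimage_prodMk p.1).ordConnected.mem_nhds_iff_exists_lt_and_exists_gt]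
  constructor
  · constructor
    · rintro ⟨⟨y, hy, hyp⟩, y', hy', hpy'⟩
      exact ⟨_, hy, _, hy', rfl, rfl, hyp, hpy'⟩
    · rintro ⟨⟨_, y⟩, hy, ⟨_, y'⟩, hy', rfl, rfl, hyp, hpy'⟩
      exact ⟨⟨y, hy, hyp⟩, y', hy', hpy'⟩
  · rw [not_and_or, or_comm]
    simp only [mem_preimage, not_exists, not_and, not_lt]

/-- Correctness of the vertical-slice decomposition: for a nonempty compact convex plane
set `C` and a point `p` whose abscissa lies strictly between the horizontal extremes of
`C`, `p` is interior to `C` iff the vertical fiber of `C` at `p.1` contains points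
strictly below and strictly above `p`; equivalently, `p` is outside the interior iff it
lies weakly above every point of the fiber or weakly below every point of the fiber. -/
theorem interior_iff_fiber_above_below (C : Set (ℝ × ℝ))
    (hne : C.Nonempty) (hc : IsCompact C) (hconv : Convex ℝ C)
    (p : ℝ × ℝ)
    (hlo : sInf (Prod.fst '' C) < p.1) (hhi : p.1 < sSup (Prod.fst '' C)) :
    (p ∈ interior C ↔
      ∃ q ∈ C, ∃ q' ∈ C, q.1 = p.1 ∧ q'.1 = p.1 ∧ q.2 < p.2 ∧ p.2 < q'.2) ∧
    (p ∉ interior C ↔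
      (∀ y : ℝ, (p.1, y) ∈ C → y ≤ p.2) ∨ (∀ y : ℝ, (p.1, y) ∈ C → p.2 ≤ y)) :=
  interior_iff_fiber_above_below_general C hne hconv p hlo hhi
end

section
/- Let P₁, …, P_n ⊆ ℝ² be pieces and t₁, …, t_n ∈ ℝ² be translations such that the placed pieces tᵢ + Pᵢ have pairwise disjoint interiors and are all contained in the rectangle [0, L] × [0, H]. Then there exists a permutation σ of {1, …, n} with P_{σ(i)} = Pᵢ for every i, such that the reassigned placement i ↦ t_{σ(i)} is again feasible (the sets t_{σ(i)} + Pᵢ have pairwise disjoint interiors and are contained in [0, L] × [0, H]) and such that for all i < j with Pᵢ = P_j, the vertical coordinates satisfy (t_{σ(i)})₂ ≤ (t_{σ(j)})₂. Hence imposing the ordering yᵢ ≤ y_j on identical pieces with i < j does not cut off any optimal strip length. -/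
open Set
open scoped Pointwise

/-- Validity of the y-axis symmetry-breaking for identical pieces: every feasible
placement can be turned, by permuting the translations among identical pieces, into a
feasible placement in which identical pieces with lower index are placed weakly lower. -/
theorem yaxis_symmetry_breaking_valid (n : ℕ)
    (P : Fin n → Set (ℝ × ℝ)) (t : Fin n → ℝ × ℝ) (L H : ℝ)
    (hdisj : ∀ i j, i ≠ j → interior (t i +ᵥ P i) ∩ interior (t j +ᵥ P j) = ∅)
    (hsub : ∀ i, t i +ᵥ P i ⊆ Set.Icc 0 L ×ˢ Set.Icc 0 H) :
    ∃ σ : Equiv.Perm (Fin n),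
      (∀ i, P (σ i) = P i) ∧
      (∀ i j, i ≠ j →
        interior (t (σ i) +ᵥ P i) ∩ interior (t (σ j) +ᵥ P j) = ∅) ∧
      (∀ i, t (σ i) +ᵥ P i ⊆ Set.Icc 0 L ×ˢ Set.Icc 0 H) ∧
      (∀ i j, i < j → P i = P j → (t (σ i)).2 ≤ (t (σ j)).2) := by
  classical
  set F : Equiv.Perm (Fin n) → ℝ := fun σ => ∑ i : Fin n, ((i.1 : ℝ) + 1) * (t (σ i)).2 with hF
  have hne : (Finset.univ.filter
      (fun σ : Equiv.Perm (Fin n) => ∀ i, P (σ i) = P i)).Nonempty := ⟨1, by simp⟩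
  obtain ⟨σ, hσmem, hσmax⟩ := Finset.exists_max_image _ F hne
  rw [Finset.mem_filter] at hσmem
  have hP : ∀ i, P (σ i) = P i := hσmem.2
  refine ⟨σ, hP, ?_, ?_, ?_⟩
  · intro i j hij
    have := hdisj (σ i) (σ j) (fun h => hij (σ.injective h))
    rwa [hP, hP] at this
  · intro i
    have := hsub (σ i); rwa [hP] at this
  · intro i j hij hPij
    by_contra hlt
    push_neg at hlt
    set τ : Equiv.Perm (Fin n) := σ * Equiv.swap i j with hτ
    have hijne : i ≠ j := ne_of_lt hij
    have hτi : τ i = σ j := by simp [hτ, Equiv.swap_apply_left]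
    have hτj : τ j = σ i := by simp [hτ, Equiv.swap_apply_right]
    have hτk : ∀ k, k ≠ i → k ≠ j → τ k = σ k := by
      intro k hk hk'
      simp [hτ, Equiv.swap_apply_of_ne_of_ne hk hk']
    have hτP : ∀ k, P (τ k) = P k := by
      intro k
      by_cases hk : k = i
      · subst hk; rw [hτi, hP, hPij]
      · by_cases hk' : k = j
        · subst hk'; rw [hτj, hP, ← hPij]
        · rw [hτk k hk hk', hP]
    have hle : F τ ≤ F σ := hσmax τ (Finset.mem_filter.mpr ⟨Finset.mem_univ _, hτP⟩)
    have hdiff : F τ - F σ = ∑ k : Fin n, ((k.1 : ℝ) + 1) * ((t (τ k)).2 - (t (σ k)).2) := by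
      simp [hF, Finset.sum_sub_distrib, mul_sub]
    have hsum : ∑ k : Fin n, ((k.1 : ℝ) + 1) * ((t (τ k)).2 - (t (σ k)).2)
        = ((i.1 : ℝ) + 1) * ((t (τ i)).2 - (t (σ i)).2)
          + ((j.1 : ℝ) + 1) * ((t (τ j)).2 - (t (σ j)).2) := by
      apply Finset.sum_eq_add_of_mem i j (Finset.mem_univ _) (Finset.mem_univ _) hijne
      intro k _ hk
      rw [hτk k hk.1 hk.2]
      ring
    have hij' : (i : ℝ) < (j : ℝ) := by exact_mod_cast hij
    have hpos : 0 < F τ - F σ := by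
      rw [hdiff, hsum, hτi, hτj]
      nlinarith [hlt, hij']
    linarith
end
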